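/- For any operator P on a finite-dimensional Hilbert space, the trace norm equals the minimum over all unitaries U, V of the entrywise l1 norm of UPV: ‖P‖_tr = min_{U,V unitary} ‖UPV‖_{l1}, and the minimum is attained. -/

import Mathlib

open scoped BigOperators ComplexOrder Kronecker

/-- Trace norm: `‖P‖_tr = Tr √(Pᴴ P)`. -/
noncomputable def traceNorm {n : Type*} [Fintype n] [DecidableEq n] (P : Matrix n n ℂ) : ℝ :=
  (((Matrix.posSemidef_conjTranspose_mul_self P).1.eigenvectorUnitary : Matrix n n ℂ) *
    Matrix.diagonal (((↑) : ℝ → ℂ) ∘ (√·) ∘ (Matrix.posSemidef_conjTranspose_mul_self P).1.eigenvalues) *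
    (star (Matrix.posSemidef_conjTranspose_mul_self P).1.eigenvectorUnitary : Matrix n n ℂ)).trace.re

/-- Entrywise l1 norm of a matrix. -/
noncomputable def l1Norm {n : Type*} [Fintype n] (P : Matrix n n ℂ) : ℝ :=
  ∑ j, ∑ k, ‖P j k‖

/-!
By the singular value decomposition there are unitaries `U₀, V₀` with `U₀ P V₀ = diag σ`, where
`σ i ≥ 0` are the square roots of the eigenvalues of `Pᴴ P`; its `l1` norm is `∑ σ = ‖P‖_tr`,
so the minimum is attained. Conversely, for any unitaries `U, V` we have
`diag σ = A (U P V) C` with `A, C` unitary, and the diagonal of `A Q C` has `l1` norm at most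
`‖Q‖_{l1}`: entry `Q k j` enters the diagonal with total weight `∑ i |A i k| |C j i| ≤ 1`, by
Cauchy–Schwarz applied to a column of `A` and a row of `C`, both unit vectors.
-/

open Matrix

section RCLike

variable {𝕜 n : Type*} [RCLike 𝕜] [Fintype n]

lemma norm_mul_mul_apply_le (A Q C : Matrix n n 𝕜) (i l : n) :
    ‖(A * Q * C) i l‖ ≤ ∑ k, ∑ j, ‖A i k‖ * ‖Q k j‖ * ‖C j l‖ := by
  simp only [mul_apply, Finset.sum_mul]
  rw [Finset.sum_comm]
  refine (norm_sum_le _ _).trans (Finset.sum_le_sum fun k _ => ?_)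
  refine (norm_sum_le _ _).trans_eq (Finset.sum_congr rfl fun j _ => ?_)
  simp only [norm_mul]

lemma inner_toLp_col_eq_conjTranspose_mul_apply (B : Matrix n n 𝕜) (i j : n) :
    inner 𝕜 (WithLp.toLp 2 fun k => B k i) (WithLp.toLp 2 fun k => B k j) = (Bᴴ * B) i j := by
  simp only [EuclideanSpace.inner_toLp_toLp, dotProduct, mul_apply, conjTranspose_apply,
    Pi.star_apply, mul_comm]

variable [DecidableEq n] {A : Matrix n n 𝕜}

lemma sum_norm_sq_col_of_mem_unitaryGroup (hA : A ∈ unitaryGroup n 𝕜) (k : n) :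
    ∑ i, ‖A i k‖ ^ 2 = 1 := by
  have h : (star A * A) k k = 1 := by rw [Unitary.star_mul_self_of_mem hA, one_apply_eq]
  simp only [mul_apply, star_apply, RCLike.star_def, RCLike.conj_mul] at h
  exact_mod_cast h

lemma sum_norm_sq_row_of_mem_unitaryGroup (hA : A ∈ unitaryGroup n 𝕜) (k : n) :
    ∑ i, ‖A k i‖ ^ 2 = 1 := by
  simpa using sum_norm_sq_col_of_mem_unitaryGroup (Unitary.star_mem hA) k

lemma sum_norm_mul_norm_le_one_of_mem_unitaryGroup {C : Matrix n n 𝕜}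
    (hA : A ∈ unitaryGroup n 𝕜) (hC : C ∈ unitaryGroup n 𝕜) (k j : n) :
    ∑ i, ‖A i k‖ * ‖C j i‖ ≤ 1 := by
  simpa [sum_norm_sq_col_of_mem_unitaryGroup hA, sum_norm_sq_row_of_mem_unitaryGroup hC] using
    Real.sum_mul_le_sqrt_mul_sqrt Finset.univ (fun i => ‖A i k‖) (fun i => ‖C j i‖)

/-- The columns of `B` with `d i ≠ 0`, rescaled by `(d i)⁻¹`, are orthonormal; `W` has as columns
a completion of them to an orthonormal basis. -/
lemma exists_mem_unitaryGroup_mul_diagonal_eq {B : Matrix n n 𝕜} {d : n → ℝ}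
    (hB : Bᴴ * B = diagonal fun i => ((d i ^ 2 : ℝ) : 𝕜)) :
    ∃ W ∈ unitaryGroup n 𝕜, W * diagonal (fun i => (d i : 𝕜)) = B := by
  set g : n → EuclideanSpace 𝕜 n := fun i => WithLp.toLp 2 fun k => B k i
  have hg : ∀ i j, inner 𝕜 (g i) (g j) = if i = j then ((d i ^ 2 : ℝ) : 𝕜) else 0 := fun i j => by
    rw [inner_toLp_col_eq_conjTranspose_mul_apply, hB, diagonal_apply]
  have hON : Orthonormal 𝕜 (Set.domRestrict {i | d i ≠ 0} fun i => ((d i : 𝕜))⁻¹ • g i) := by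
    rw [orthonormal_iff_ite]
    rintro ⟨i, hi⟩ ⟨j, -⟩
    simp only [Set.domRestrict_apply, inner_smul_left, inner_smul_right, hg, Subtype.mk.injEq]
    split_ifs with hij
    · subst hij
      have : (d i : 𝕜) ≠ 0 := by exact_mod_cast hi
      simp only [map_inv₀, RCLike.conj_ofReal, RCLike.ofReal_pow]
      field_simp
    · simp
  obtain ⟨b, hb⟩ := hON.exists_orthonormalBasis_extension_of_card_eq finrank_euclideanSpace
  refine ⟨_, (EuclideanSpace.basisFun n 𝕜).toMatrix_orthonormalBasis_mem_unitary b, ?_⟩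
  ext k i
  rw [mul_diagonal]
  by_cases hi : d i = 0
  · have : g i = 0 := inner_self_eq_zero.mp (by rw [hg, if_pos rfl, hi]; simp)
    simpa [hi] using (congrArg (fun v : EuclideanSpace 𝕜 n => v k) this).symm
  · have : (d i : 𝕜) ≠ 0 := by exact_mod_cast hi
    simp only [Module.Basis.toMatrix_apply, hb i hi, map_smul, Finsupp.coe_smul, Pi.smul_apply,
      OrthonormalBasis.coe_toBasis_repr_apply, EuclideanSpace.basisFun_repr, smul_eq_mul, g]
    field_simp

lemma exists_mem_unitaryGroup_mul_mul_eq_diagonal_sqrt_eigenvalues (P : Matrix n n 𝕜) :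
    ∃ U ∈ unitaryGroup n 𝕜, ∃ V ∈ unitaryGroup n 𝕜, U * P * V =
      diagonal fun i => ((√((posSemidef_conjTranspose_mul_self P).1.eigenvalues i) : ℝ) : 𝕜) := by
  have hP := posSemidef_conjTranspose_mul_self P
  set V : Matrix n n 𝕜 := (hP.1.eigenvectorUnitary : Matrix n n 𝕜)
  have hPV : (P * V)ᴴ * (P * V) = diagonal fun i => ((√(hP.1.eigenvalues i) ^ 2 : ℝ) : 𝕜) :=
    calc (P * V)ᴴ * (P * V) = star V * (Pᴴ * P) * V := by
          rw [conjTranspose_mul, star_eq_conjTranspose]; simp only [mul_assoc]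
      _ = diagonal (RCLike.ofReal ∘ hP.1.eigenvalues) := by
          simpa using hP.1.conjStarAlgAut_star_eigenvectorUnitary
      _ = _ := by simp [Function.comp_def, Real.sq_sqrt (hP.eigenvalues_nonneg _)]
  obtain ⟨W, hW, hWB⟩ := exists_mem_unitaryGroup_mul_diagonal_eq hPV
  refine ⟨star W, Unitary.star_mem hW, V, SetLike.coe_mem _, ?_⟩
  rw [mul_assoc, ← hWB, ← mul_assoc, Unitary.star_mul_self_of_mem hW, one_mul]

end RCLike

section Complex

variable {n : Type*} [Fintype n] [DecidableEq n]

lemma l1Norm_diagonal (d : n → ℂ) : l1Norm (diagonal d) = ∑ i, ‖d i‖ := by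
  simp [l1Norm, diagonal_apply, apply_ite (‖·‖)]

lemma sum_norm_diag_le_l1Norm {A C : Matrix n n ℂ} (hA : A ∈ unitaryGroup n ℂ)
    (hC : C ∈ unitaryGroup n ℂ) (Q : Matrix n n ℂ) :
    ∑ i, ‖(A * Q * C) i i‖ ≤ l1Norm Q :=
  calc ∑ i, ‖(A * Q * C) i i‖
      ≤ ∑ i, ∑ k, ∑ j, ‖A i k‖ * ‖Q k j‖ * ‖C j i‖ :=
        Finset.sum_le_sum fun i _ => norm_mul_mul_apply_le A Q C i i
    _ = ∑ k, ∑ j, ‖Q k j‖ * ∑ i, ‖A i k‖ * ‖C j i‖ := by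
        simp only [Finset.mul_sum]
        rw [Finset.sum_comm]
        refine Finset.sum_congr rfl fun k _ => ?_
        rw [Finset.sum_comm]
        exact Finset.sum_congr rfl fun j _ => Finset.sum_congr rfl fun i _ => by ring
    _ ≤ ∑ k, ∑ j, ‖Q k j‖ :=
        Finset.sum_le_sum fun k _ => Finset.sum_le_sum fun j _ => mul_le_of_le_one_right
          (norm_nonneg _) (sum_norm_mul_norm_le_one_of_mem_unitaryGroup hA hC k j)

lemma traceNorm_eq_sum_sqrt_eigenvalues (P : Matrix n n ℂ) :
    traceNorm P = ∑ i, √((posSemidef_conjTranspose_mul_self P).1.eigenvalues i) := by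
  rw [traceNorm, trace_mul_cycle, Unitary.coe_star_mul_self, one_mul, trace_diagonal,
    Complex.re_sum]
  simp

end Complex

/-- the trace norm is the minimum, over unitaries U, V, of ‖U P V‖_{l1},
and the minimum is attained. -/
theorem traceNorm_eq_min_l1 {n : Type*} [Fintype n] [DecidableEq n] (P : Matrix n n ℂ) :
    IsLeast {x : ℝ | ∃ U V : Matrix n n ℂ, U ∈ Matrix.unitaryGroup n ℂ ∧
      V ∈ Matrix.unitaryGroup n ℂ ∧ x = l1Norm (U * P * V)} (traceNorm P) := by
  obtain ⟨U₀, hU₀, V₀, hV₀, hdiag⟩ := exists_mem_unitaryGroup_mul_mul_eq_diagonal_sqrt_eigenvalues P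
  have hl1 : l1Norm (U₀ * P * V₀) = traceNorm P := by
    rw [hdiag, l1Norm_diagonal, traceNorm_eq_sum_sqrt_eigenvalues]
    simp [abs_of_nonneg, Real.sqrt_nonneg]
  have hdiag_l1 : ∑ i, ‖(U₀ * P * V₀) i i‖ = l1Norm (U₀ * P * V₀) := by
    rw [hdiag, l1Norm_diagonal]
    simp
  refine ⟨⟨U₀, V₀, hU₀, hV₀, hl1.symm⟩, ?_⟩
  rintro _ ⟨U, V, hU, hV, rfl⟩
  have hconj : U₀ * star U * (U * P * V) * (star V * V₀) = U₀ * P * V₀ := by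
    rw [show U₀ * star U * (U * P * V) * (star V * V₀) =
      U₀ * (star U * U) * P * (V * star V) * V₀ by simp only [mul_assoc],
      Unitary.star_mul_self_of_mem hU, Unitary.mul_star_self_of_mem hV, mul_one, mul_one]
  calc traceNorm P = ∑ i, ‖(U₀ * star U * (U * P * V) * (star V * V₀)) i i‖ := by
        rw [hconj, hdiag_l1, hl1]
    _ ≤ l1Norm (U * P * V) := sum_norm_diag_le_l1Norm (mul_mem hU₀ (Unitary.star_mem hU))
        (mul_mem (Unitary.star_mem hV) hV₀) _
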